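/- arXiv:1905.07533 — 6 statements merged into one kernel-verified Lean document; each statement's English description precedes it below -/
import Mathlib

section
/- Let $G$ be a graph consisting of disjoint cycles and let $G'$ be obtained by choosing a nonempty subset $M$ of vertices on each cycle (with at least one chosen vertex per cycle) and, for each $x \in M$, adding edges from $x$ to the nearest chosen vertices $l_x$ and $r_x$ encountered when traversing the cycle in each direction. Then $G'$ is a disjoint union of cycles (where a single chosen vertex on a cycle yields a self-loop or 2-cycle degenerate case), the connected components of $G'$ are in bijection with the connected components of $G$, and $G'$ can be obtained from $G$ by contracting edges. -/
/-- Structural correctness of the Shrink contraction. A disjoint union of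
cycles is modelled by a permutation `σ` of the finite vertex set `V` (cycles =
orbits). Given a set `M` of sampled vertices meeting every cycle, the
contracted graph `G'` is again a disjoint union of cycles: it is given by the
first-return permutation `τ` of `M` (each `x ∈ M` is joined to the nearest
sampled vertex in each traversal direction), its connected components are in
bijection with those of `G` (`σ.SameCycle x y ↔ τ.SameCycle x y` on `M`), and
`G'` is obtained from `G` by contracting each vertex onto a sampled vertex of
its own cycle. -/
theorem shrink_contraction_structure {V : Type*} [Fintype V]
    (σ : Equiv.Perm V) (M : Set V)
    (hM : ∀ v : V, ∃ n : ℕ, 0 < n ∧ (σ ^ n) v ∈ M) :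
    ∃ τ : Equiv.Perm V,
      (∀ x ∉ M, τ x = x) ∧
      (∀ x ∈ M, τ x = (σ ^ sInf {k : ℕ | 0 < k ∧ (σ ^ k) x ∈ M}) x) ∧
      (∀ x ∈ M, ∀ y ∈ M, (σ.SameCycle x y ↔ τ.SameCycle x y)) ∧
      ∃ ρ : V → V,
        (∀ v, ρ v ∈ M) ∧
        (∀ v, σ.SameCycle v (ρ v)) ∧
        (∀ x ∈ M, ρ x = x) := by
  classical
  set n : V → ℕ := fun x => sInf {k : ℕ | 0 < k ∧ (σ ^ k) x ∈ M} with hn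
  have hne : ∀ x : V, ({k : ℕ | 0 < k ∧ (σ ^ k) x ∈ M}).Nonempty := by
    intro x; obtain ⟨m, hm, hmM⟩ := hM x; exact ⟨m, hm, hmM⟩
  have hmem : ∀ x : V, 0 < n x ∧ (σ ^ n x) x ∈ M := fun x => Nat.sInf_mem (hne x)
  have hminV : ∀ x : V, ∀ k, 0 < k → (σ ^ k) x ∈ M → n x ≤ k := by
    intro x k hk hkM; exact Nat.sInf_le ⟨hk, hkM⟩
  set f : V → V := fun x => if x ∈ M then (σ ^ n x) x else x with hf
  have hfM : ∀ x ∈ M, f x ∈ M := by intro x hx; simp only [hf, if_pos hx]; exact (hmem x).2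
  -- key cancellation lemma for injectivity
  have key : ∀ a b : V, a ∈ M → b ∈ M → n a ≤ n b → (σ ^ n a) a = (σ ^ n b) b → a = b := by
    intro a b ha hb hab heq
    have hd : a = (σ ^ (n b - n a)) b := by
      have h1 : (σ ^ n a) a = (σ ^ n a) ((σ ^ (n b - n a)) b) := by
        rw [heq, ← Equiv.Perm.mul_apply, ← pow_add, Nat.add_sub_cancel' hab]
      exact (σ ^ n a).injective h1
    rcases Nat.eq_zero_or_pos (n b - n a) with h0 | hpos
    · have hnab : n a = n b := by omega
      rw [hnab] at heq
      exact (σ ^ n b).injective heq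
    · exfalso
      have hle := hminV b _ hpos (hd ▸ ha)
      have := (hmem a).1
      omega
  have hinj : Function.Injective f := by
    intro x y hxy
    by_cases hx : x ∈ M <;> by_cases hy : y ∈ M
    · simp only [hf, if_pos hx, if_pos hy] at hxy
      rcases le_total (n x) (n y) with h | h
      · exact key x y hx hy h hxy
      · exact (key y x hy hx h hxy.symm).symm
    · exact absurd (hxy ▸ hfM x hx) (by simpa [hf, if_neg hy] using hy)
    · exact absurd (hxy ▸ hfM y hy) (by simpa [hf, if_neg hx] using hx)
    · simpa [hf, if_neg hx, if_neg hy] using hxy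
  have hbij : Function.Bijective f := Finite.injective_iff_bijective.mp hinj
  refine ⟨Equiv.ofBijective f hbij, ?_, ?_, ?_, ?_⟩
  · intro x hx; simp [Equiv.ofBijective_apply, hf, if_neg hx]
  · intro x hx; simp [Equiv.ofBijective_apply, hf, if_pos hx]; rfl
  · set τ : Equiv.Perm V := Equiv.ofBijective f hbij with hτ
    have hτapp : ∀ x ∈ M, τ x = (σ ^ n x) x := by
      intro x hx; simp [hτ, Equiv.ofBijective_apply, hf, if_pos hx]
    intro x hx y hy
    constructor
    · intro hσ
      obtain ⟨i, hiord, hi⟩ := hσ.exists_pow_eq'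
      clear hσ
      induction i using Nat.strong_induction_on generalizing x with
      | _ i ih =>
        rcases Nat.eq_zero_or_pos i with h0 | hpos
        · subst h0; simp only [pow_zero, Equiv.Perm.coe_one, id] at hi; subst hi
          exact Equiv.Perm.SameCycle.refl τ x
        · have hle : n x ≤ i := hminV x i hpos (hi ▸ hy)
          have hstep : (σ ^ (i - n x)) (τ x) = y := by
            rw [hτapp x hx, ← Equiv.Perm.mul_apply, ← pow_add, Nat.sub_add_cancel hle, hi]
          have htx : τ x ∈ M := by rw [hτapp x hx]; exact (hmem x).2
          have hlt : i - n x < i := Nat.sub_lt hpos (hmem x).1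
          have h1 : τ.SameCycle x (τ x) := ⟨1, by simp⟩
          exact h1.trans (ih _ hlt (τ x) htx (by omega) hstep)
    · intro hτs
      obtain ⟨i, _, hi⟩ := hτs.exists_pow_eq'
      have hpow : ∀ j : ℕ, ∀ z, z ∈ M → ∃ m : ℕ, (τ ^ j) z = (σ ^ m) z ∧ (τ ^ j) z ∈ M := by
        intro j
        induction j with
        | zero => intro z hz; exact ⟨0, by simp, by simpa using hz⟩
        | succ j ihj =>
          intro z hz
          obtain ⟨m, hm, hmM⟩ := ihj z hz
          refine ⟨n ((τ ^ j) z) + m, ?_, ?_⟩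
          · rw [pow_succ', Equiv.Perm.mul_apply, hτapp _ hmM, hm,
              ← Equiv.Perm.mul_apply, ← pow_add]
          · rw [pow_succ', Equiv.Perm.mul_apply, hτapp _ hmM]
            exact (hmem _).2
      obtain ⟨m, hm, _⟩ := hpow i x hx
      exact ⟨(m : ℤ), by rw [zpow_natCast, ← hm]; exact hi⟩
  · refine ⟨fun v => if v ∈ M then v else (σ ^ n v) v, ?_, ?_, ?_⟩
    · intro v; by_cases hv : v ∈ M
      · simpa [if_pos hv] using hv
      · simpa [if_neg hv] using (hmem v).2
    · intro v; by_cases hv : v ∈ M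
      · simp [if_pos hv]; exact Equiv.Perm.SameCycle.refl σ v
      · exact ⟨(n v : ℤ), by simp [if_neg hv, zpow_natCast]⟩
    · intro x hx; simp [if_pos hx]
end

section
/- Let $T$ be a tree rooted at $r$ with an Euler tour starting at $r$. For each non-root vertex $v$, let $PN(v)$ be the number of forward (parent-to-child) edges in the tour at positions up to and including the forward edge entering $v$, and let $PN(r) = 0$. Then $PN$ is a preorder numbering of $T$: $PN$ is a bijection from $V(T)$ to $\{0, 1, \ldots, n-1\}$, $PN(u) < PN(v)$ whenever $u$ is a proper ancestor of $v$, and the vertices of the subtree rooted at $v$ receive exactly the numbers $\{PN(v), PN(v)+1, \ldots, PN(v) + \mathrm{Size}(v) - 1\}$, where $\mathrm{Size}(v)$ is the number of vertices in $v$'s subtree. -/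
/-!
The walk `vertexAt r tour` can enter the subtree of `v ≠ r` only along the edge `(p v, v)` and
leave it only along `(v, p v)`, and each of these edges occurs exactly once. Since the walk starts
and ends at the root, it is inside the subtree of `v` exactly between these two occurrences.
Consequently the subtree of `v` consists of the vertices discovered (first reached) during that
time interval. `PN v` counts the forward edges up to the one discovering `v`, i.e. the vertices
discovered before `v`, so `PN` is the rank of the discovery time, and the ranks of the vertices
discovered during a time interval form an interval of integers.
-/

open Finset Function

namespace List

theorem eq_idxOf_of_count_eq_one {α : Type*} [BEq α] [LawfulBEq α] {l : List α} {x : α}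
    (hx : l.count x = 1) {j : ℕ} (hj : j < l.length) (h : l[j] = x) : j = l.idxOf x := by
  have hsucc := count_getElem_take_succ (xs := l) (i := j) (hi := hj)
  have hle := (take_sublist (j + 1) l).count_le l[j]
  rw [h] at hsucc hle
  have hmem : x ∈ l := count_pos_iff.mp (by omega)
  have hnot : ¬ l.idxOf x < j := by
    rw [← mem_take_iff_idxOf_lt hmem, ← count_pos_iff]; omega
  have hlt : l.idxOf x < j + 1 := by
    rw [← mem_take_iff_idxOf_lt hmem, ← count_pos_iff]; omega
  omega

end List

namespace EulerTour

theorem iff_lt_and_le_of_unique_rise_fall {f : ℕ → Prop} {a b n : ℕ}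
    (h0 : ¬ f 0) (hn : ¬ f n) (ha : f (a + 1)) (hrise : ∀ j < n, ¬ f j → f (j + 1) → j = a)
    (hfall : ∀ j < n, f j → ¬ f (j + 1) → j = b)
    {i : ℕ} (hi : i ≤ n) : f i ↔ a < i ∧ i ≤ b := by
  have before : ∀ i ≤ a, i ≤ n → ¬ f i := by
    intro i
    induction i with
    | zero => exact fun _ _ => h0
    | succ i ih =>
      intro hia hin hf
      have := hrise i (by omega) (ih (by omega) (by omega)) hf
      omega
  have inside : ∀ i, a + 1 ≤ i → i ≤ b → i ≤ n → f i := by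
    intro i hai
    induction i, hai using Nat.le_induction with
    | base => exact fun _ _ => ha
    | succ i hai ih =>
      intro hib hin
      by_contra hf
      have := hfall i (by omega) (ih (by omega) (by omega)) hf
      omega
  have after : ∀ d i, i + d = n → b < i → ¬ f i := by
    intro d
    induction d with
    | zero => exact fun i hi _ => by rwa [← hi] at hn
    | succ d ih =>
      intro i hi hbi hf
      have := hfall i (by omega) hf (ih (i + 1) (by omega) (by omega))
      omega
  constructor
  · intro hf
    by_contra hout
    rcases le_or_gt i a with hia | hai
    · exact before i hia hi hf
    · exact after (n - i) i (by omega) (by omega) hf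
  · exact fun ⟨hai, hib⟩ => inside i hai hib hi

variable {α : Type*} [Fintype α] {t : α → ℕ}

def rank (t : α → ℕ) (u : α) : ℕ := #{w | t w < t u}

theorem rank_le_rank {u v : α} (h : t u ≤ t v) : rank t u ≤ rank t v :=
  card_le_card (monotone_filter_right _ fun _ _ hw => lt_of_lt_of_le hw h)

theorem rank_lt_rank {u v : α} (h : t u < t v) : rank t u < rank t v := by
  refine card_lt_card ((ssubset_iff_of_subset ?_).mpr ⟨u, by simp [h], by simp⟩)
  exact monotone_filter_right _ fun _ _ hw => lt_trans hw h

theorem rank_injective (ht : Injective t) : Injective (rank t) := by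
  intro u v huv
  by_contra hne
  rcases lt_or_gt_of_ne (ht.ne hne) with h | h
  · exact (rank_lt_rank h).ne huv
  · exact (rank_lt_rank h).ne' huv

theorem rank_eq_card_filter_ne_le [DecidableEq α] (ht : Injective t) {r : α} (hr : t r = 0)
    (u : α) : rank t u = #{w | w ≠ r ∧ t w ≤ t u} := by
  have hu : #{w | t w ≤ t u} = rank t u + 1 := by
    rw [rank, ← card_insert_of_notMem (s := {w | t w < t u}) (a := u) (by simp)]
    congr 1; ext w; simp [le_iff_eq_or_lt, ht.eq_iff]
  have hr' : #{w | t w ≤ t u} = #{w | w ≠ r ∧ t w ≤ t u} + 1 := by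
    rw [← card_insert_of_notMem (s := {w | w ≠ r ∧ t w ≤ t u}) (a := r) (by simp)]
    congr 1; ext w; by_cases hw : w = r <;> simp [hw, hr]
  omega

theorem image_rank_setOf_le_le (ht : Injective t) {v : α} {b : ℕ} (hvb : t v ≤ b) :
    rank t '' {w | t v ≤ t w ∧ t w ≤ b} =
      Set.Icc (rank t v) (rank t v + Nat.card {w | t v ≤ t w ∧ t w ≤ b} - 1) := by
  have hcard : Set.ncard {w | t v ≤ t w ∧ t w ≤ b} = #{w | t v ≤ t w ∧ t w ≤ b} := by
    rw [Set.ncard_eq_toFinset_card', Set.toFinset_ofPred]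
  have hpos : 0 < #{w | t v ≤ t w ∧ t w ≤ b} := card_pos.mpr ⟨v, by simpa using hvb⟩
  have hsplit : #{w | t w ≤ b} = rank t v + #{w | t v ≤ t w ∧ t w ≤ b} := by
    rw [← card_filter_add_card_filter_not (s := {w | t w ≤ b}) (fun w => t w < t v), rank,
      filter_filter, filter_filter]
    congr 2 <;> ext w <;> simp only [mem_filter, mem_univ, true_and, not_lt] <;> omega
  rw [Nat.card_coe_set_eq, hcard]
  have hmaps : rank t '' {w | t v ≤ t w ∧ t w ≤ b} ⊆
      Set.Icc (rank t v) (rank t v + #{w | t v ≤ t w ∧ t w ≤ b} - 1) := by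
    rintro _ ⟨u, ⟨hvu, hub⟩, rfl⟩
    have : rank t u < #{w | t w ≤ b} :=
      card_lt_card ((ssubset_iff_of_subset (monotone_filter_right _ fun _ _ hw => by omega)).mpr
        ⟨u, by simpa using hub, by simp⟩)
    exact ⟨rank_le_rank hvu, by omega⟩
  refine Set.eq_of_subset_of_ncard_le hmaps ?_ (Set.finite_Icc _ _)
  rw [Set.ncard_image_of_injective _ (rank_injective ht), hcard, ← Finset.coe_Icc,
    Set.ncard_coe_finset, Nat.card_Icc]
  omega

variable {V : Type*} {p : V → V} {r u v : V}

def subtree (p : V → V) (v : V) : Set V := {u | ∃ k, p^[k] u = v}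

theorem mem_subtree_self : v ∈ subtree p v := ⟨0, rfl⟩

theorem mem_subtree_of_parent_mem (h : p u ∈ subtree p v) : u ∈ subtree p v :=
  let ⟨k, hk⟩ := h; ⟨k + 1, hk⟩

theorem eq_of_mem_subtree_of_parent_notMem (hu : u ∈ subtree p v) (hpu : p u ∉ subtree p v) :
    u = v := by
  obtain ⟨_ | k, hk⟩ := hu
  · exact hk
  · exact absurd ⟨k, hk⟩ hpu

theorem eq_root_of_root_mem_subtree (hr : p r = r) (h : r ∈ subtree p v) : v = r := by
  obtain ⟨k, hk⟩ := h
  rw [← hk, Function.iterate_fixed hr]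

theorem subtree_root (hroot : ∀ v, ∃ k, p^[k] v = r) : subtree p r = Set.univ :=
  Set.eq_univ_of_forall hroot

theorem eq_of_enters_subtree {a b : V} (hab : p b = a ∨ p a = b) (ha : a ∉ subtree p v)
    (hb : b ∈ subtree p v) : (a, b) = (p v, v) := by
  rcases hab with h | h
  · obtain rfl := eq_of_mem_subtree_of_parent_notMem hb (h ▸ ha)
    rw [h]
  · exact absurd (mem_subtree_of_parent_mem (h ▸ hb)) ha

theorem eq_of_leaves_subtree {a b : V} (hab : p b = a ∨ p a = b) (ha : a ∈ subtree p v)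
    (hb : b ∉ subtree p v) : (a, b) = (v, p v) := by
  simpa [and_comm] using eq_of_enters_subtree hab.symm hb ha

-- The vertex reached after `i` steps; the default `(r, r)` makes it `r` from time
-- `tour.length` on.
def vertexAt (r : V) (tour : List (V × V)) (i : ℕ) : V := (tour.getD i (r, r)).1

theorem vertexAt_length {tour : List (V × V)} : vertexAt r tour tour.length = r := by
  rw [vertexAt, List.getD_eq_default _ _ le_rfl]

section Tour

variable [DecidableEq V] {tour : List (V × V)}

structure IsEulerTour (p : V → V) (r : V) (tour : List (V × V)) : Prop where
  ne_nil : tour ≠ []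
  head_fst : (tour.head ne_nil).1 = r
  getLast_snd : (tour.getLast ne_nil).2 = r
  isChain : tour.IsChain (fun e f => e.2 = f.1)
  isTreeEdge : ∀ e ∈ tour, (p e.2 = e.1 ∧ e.2 ≠ r) ∨ (p e.1 = e.2 ∧ e.1 ≠ r)
  count_eq_one : ∀ v, v ≠ r → tour.count (p v, v) = 1 ∧ tour.count (v, p v) = 1

-- The walk first reaches `v` at time `discoveryTime` and leaves it for the last time at time
-- `finishTime`; for the root these are the two ends of the walk.
def discoveryTime (p : V → V) (r : V) (tour : List (V × V)) (v : V) : ℕ :=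
  if v = r then 0 else tour.idxOf (p v, v) + 1

def finishTime (p : V → V) (r : V) (tour : List (V × V)) (v : V) : ℕ :=
  if v = r then tour.length else tour.idxOf (v, p v)

namespace IsEulerTour

theorem vertexAt_zero (ht : IsEulerTour p r tour) : vertexAt r tour 0 = r := by
  rw [vertexAt, List.getD_eq_getElem _ _ (List.length_pos_iff.mpr ht.ne_nil),
    ← List.head_eq_getElem ht.ne_nil]
  exact ht.head_fst

theorem getElem_eq_vertexAt (ht : IsEulerTour p r tour) {j : ℕ} (hj : j < tour.length) :
    tour[j] = (vertexAt r tour j, vertexAt r tour (j + 1)) := by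
  rw [vertexAt, vertexAt, List.getD_eq_getElem _ _ hj]
  refine Prod.ext rfl ?_
  rcases lt_or_eq_of_le (show j + 1 ≤ tour.length by omega) with hj' | hj'
  · rw [List.getD_eq_getElem _ _ hj']
    exact List.isChain_iff_getElem.mp ht.isChain j hj'
  · rw [List.getD_eq_default _ _ hj'.ge]
    simp only [← ht.getLast_snd, List.getLast_eq_getElem, ← hj', Nat.add_sub_cancel]

theorem adj_vertexAt (ht : IsEulerTour p r tour) {j : ℕ} (hj : j < tour.length) :
    p (vertexAt r tour (j + 1)) = vertexAt r tour j ∨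
      p (vertexAt r tour j) = vertexAt r tour (j + 1) := by
  have := ht.isTreeEdge _ (List.getElem_mem hj)
  rw [ht.getElem_eq_vertexAt hj] at this
  exact this.imp And.left And.left

theorem snd_ne_root_of_forward (ht : IsEulerTour p r tour) (hr : p r = r) {e : V × V}
    (he : e ∈ tour) (hfwd : p e.2 = e.1) : e.2 ≠ r := by
  rcases ht.isTreeEdge e he with ⟨_, h⟩ | ⟨h, h'⟩
  · exact h
  · rintro h2
    exact h' (by rw [← hfwd, h2, hr])

theorem edges_mem_of_ne_root (ht : IsEulerTour p r tour) (hv : v ≠ r) :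
    (p v, v) ∈ tour ∧ (v, p v) ∈ tour :=
  ⟨List.count_pos_iff.mp (by rw [(ht.count_eq_one v hv).1]; exact one_pos),
    List.count_pos_iff.mp (by rw [(ht.count_eq_one v hv).2]; exact one_pos)⟩

theorem discoveryTime_le_length (ht : IsEulerTour p r tour) (v : V) :
    discoveryTime p r tour v ≤ tour.length := by
  unfold discoveryTime
  split_ifs with hv
  · exact Nat.zero_le _
  · exact List.idxOf_lt_length_of_mem (ht.edges_mem_of_ne_root hv).1

theorem vertexAt_discoveryTime (ht : IsEulerTour p r tour) (v : V) :
    vertexAt r tour (discoveryTime p r tour v) = v := by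
  unfold discoveryTime
  split_ifs with hv
  · exact ht.vertexAt_zero.trans hv.symm
  · have hmem := (ht.edges_mem_of_ne_root hv).1
    have h := ht.getElem_eq_vertexAt (List.idxOf_lt_length_of_mem hmem)
    rw [List.getElem_idxOf] at h
    exact (congrArg Prod.snd h).symm

theorem discoveryTime_injective (ht : IsEulerTour p r tour) :
    Function.Injective (discoveryTime p r tour) :=
  Function.LeftInverse.injective ht.vertexAt_discoveryTime

theorem mem_subtree_vertexAt_iff (ht : IsEulerTour p r tour) (hr : p r = r)
    (hroot : ∀ v, ∃ k, p^[k] v = r) {i : ℕ} (hi : i ≤ tour.length) :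
    vertexAt r tour i ∈ subtree p v ↔
      discoveryTime p r tour v ≤ i ∧ i ≤ finishTime p r tour v := by
  by_cases hv : v = r
  · subst hv
    simp [subtree_root hroot, discoveryTime, finishTime, hi]
  have hroot_notMem : r ∉ subtree p v := fun h => hv (eq_root_of_root_mem_subtree hr h)
  simp only [discoveryTime, finishTime, hv, if_false, Nat.add_one_le_iff]
  have h0 : vertexAt r tour 0 ∉ subtree p v := by rwa [ht.vertexAt_zero]
  have hn : vertexAt r tour tour.length ∉ subtree p v := by rwa [vertexAt_length]
  refine iff_lt_and_le_of_unique_rise_fall (f := fun i => vertexAt r tour i ∈ subtree p v) h0 hn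
    ?_ (fun j hj hout hin => ?_) (fun j hj hin hout => ?_) hi
  · have := ht.vertexAt_discoveryTime v
    simp only [discoveryTime, hv, if_false] at this
    simp only [this]
    exact mem_subtree_self
  · refine List.eq_idxOf_of_count_eq_one (ht.count_eq_one v hv).1 hj ?_
    rw [ht.getElem_eq_vertexAt hj, eq_of_enters_subtree (ht.adj_vertexAt hj) hout hin]
  · refine List.eq_idxOf_of_count_eq_one (ht.count_eq_one v hv).2 hj ?_
    rw [ht.getElem_eq_vertexAt hj, eq_of_leaves_subtree (ht.adj_vertexAt hj) hin hout]

theorem mem_subtree_iff (ht : IsEulerTour p r tour) (hr : p r = r)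
    (hroot : ∀ v, ∃ k, p^[k] v = r) :
    u ∈ subtree p v ↔
      discoveryTime p r tour v ≤ discoveryTime p r tour u ∧
        discoveryTime p r tour u ≤ finishTime p r tour v := by
  conv_lhs => rw [← ht.vertexAt_discoveryTime u]
  exact ht.mem_subtree_vertexAt_iff hr hroot (ht.discoveryTime_le_length u)

theorem length_filter_take_eq_card [Fintype V] (ht : IsEulerTour p r tour) (hr : p r = r)
    (c : ℕ) : ((tour.take c).filter (fun e => decide (p e.2 = e.1))).length =
      #{w | w ≠ r ∧ discoveryTime p r tour w ≤ c} := by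
  set L := (tour.take c).filter (fun e => decide (p e.2 = e.1))
  have hL : ∀ e ∈ L, e ∈ tour ∧ e = (p e.2, e.2) := fun e he => by
    rw [List.mem_filter, decide_eq_true_iff] at he
    exact ⟨List.mem_of_mem_take he.1, Prod.ext he.2.symm rfl⟩
  have hnodup : (L.map Prod.snd).Nodup := by
    refine List.Nodup.map_on (fun e he e' he' h => ?_) ?_
    · rw [(hL e he).2, (hL e' he').2, h]
    · refine List.nodup_iff_count_le_one.mpr fun e => ?_
      by_cases he : e ∈ L
      · obtain ⟨he_tour, he_eq⟩ := hL e he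
        have hne : e.2 ≠ r := ht.snd_ne_root_of_forward hr he_tour (congrArg Prod.fst he_eq).symm
        calc L.count e ≤ tour.count e :=
              ((List.filter_sublist).trans (List.take_sublist c tour)).count_le e
          _ = 1 := by rw [he_eq]; exact (ht.count_eq_one _ hne).1
      · exact (List.count_eq_zero.mpr he).trans_le zero_le_one
  rw [← List.length_map Prod.snd, ← List.toFinset_card_of_nodup hnodup]
  congr 1
  ext w
  simp only [List.mem_toFinset, List.mem_map, mem_filter, mem_univ, true_and]
  constructor
  · rintro ⟨e, he, rfl⟩
    obtain ⟨he_tour, he_eq⟩ := hL e he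
    have hne := ht.snd_ne_root_of_forward hr he_tour (congrArg Prod.fst he_eq).symm
    have htake : (p e.2, e.2) ∈ tour.take c := he_eq ▸ (List.mem_filter.mp he).1
    rw [discoveryTime, if_neg hne]
    exact ⟨hne, (List.mem_take_iff_idxOf_lt (he_eq ▸ he_tour)).mp htake⟩
  · rintro ⟨hne, hc⟩
    rw [discoveryTime, if_neg hne] at hc
    refine ⟨(p w, w), List.mem_filter.mpr ⟨?_, by simp⟩, rfl⟩
    exact (List.mem_take_iff_idxOf_lt (ht.edges_mem_of_ne_root hne).1).mpr hc

theorem length_filter_take_succ_idxOf_eq_rank [Fintype V] (ht : IsEulerTour p r tour)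
    (hr : p r = r) (hv : v ≠ r) :
    ((tour.take (tour.idxOf (p v, v) + 1)).filter (fun e => decide (p e.2 = e.1))).length =
      rank (discoveryTime p r tour) v := by
  rw [rank_eq_card_filter_ne_le ht.discoveryTime_injective (r := r) (by simp [discoveryTime]),
    ht.length_filter_take_eq_card hr, discoveryTime, if_neg hv]

end IsEulerTour

end Tour

end EulerTour

open EulerTour

/-- Euler-tour preorder numbering. With the rooted tree and Euler tour as in
the subtree-size lemma, let `PN v` be the number of forward (parent-to-child)
edges at positions up to and including the forward edge entering `v`, and
`PN r = 0`. Then `PN` is a preorder numbering: it is a bijection onto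
`{0, …, n-1}`, proper ancestors get smaller numbers, and the subtree of `v`
receives exactly the numbers `{PN v, …, PN v + Size v - 1}`. -/
theorem euler_tour_preorder_numbering {V : Type*} [Fintype V] [DecidableEq V]
    (r : V) (p : V → V) (hr : p r = r) (hroot : ∀ v, ∃ k, p^[k] v = r)
    (tour : List (V × V)) (hne : tour ≠ [])
    (hstart : (tour.head hne).1 = r) (hend : (tour.getLast hne).2 = r)
    (hchain : List.Chain' (fun e f => e.2 = f.1) tour)
    (hedges : ∀ e ∈ tour, (p e.2 = e.1 ∧ e.2 ≠ r) ∨ (p e.1 = e.2 ∧ e.1 ≠ r))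
    (hcount : ∀ v : V, v ≠ r →
      tour.count (p v, v) = 1 ∧ tour.count (v, p v) = 1)
    (PN : V → ℕ)
    (hPNr : PN r = 0)
    (hPN : ∀ v : V, v ≠ r →
      PN v = ((tour.take (List.idxOf (p v, v) tour + 1)).filter
        (fun e => decide (p e.2 = e.1))).length) :
    Function.Injective PN ∧
    Set.range PN = Set.Iio (Fintype.card V) ∧
    (∀ u v : V, u ≠ v → (∃ k, 0 < k ∧ p^[k] v = u) → PN u < PN v) ∧
    (∀ v : V, PN '' {u | ∃ k, p^[k] u = v}
      = Set.Icc (PN v) (PN v + Nat.card {u | ∃ k, p^[k] u = v} - 1)) := by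
  have ht : IsEulerTour p r tour := ⟨hne, hstart, hend, hchain, hedges, hcount⟩
  set d := discoveryTime p r tour
  have hinj : Function.Injective d := ht.discoveryTime_injective
  obtain rfl : PN = rank d := funext fun v => by
    by_cases hv : v = r
    · simp [hv, hPNr, rank, d, discoveryTime]
    · rw [hPN v hv, ht.length_filter_take_succ_idxOf_eq_rank hr hv]
  have himage (v : V) :
      rank d '' subtree p v = Set.Icc (rank d v) (rank d v + Nat.card (subtree p v) - 1) := by
    have hsub : subtree p v = {w | d v ≤ d w ∧ d w ≤ finishTime p r tour v} :=
      Set.ext fun w => ht.mem_subtree_iff hr hroot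
    rw [hsub]
    exact image_rank_setOf_le_le hinj ((ht.mem_subtree_iff hr hroot).mp mem_subtree_self).2
  refine ⟨rank_injective hinj, ?_, fun u v huv hk => ?_, himage⟩
  · have hroot_image := himage r
    rw [subtree_root hroot, Set.image_univ, Nat.card_univ,
      show rank d r = 0 by simp [rank, d, discoveryTime]] at hroot_image
    rw [hroot_image, Nat.card_eq_fintype_card]
    ext n
    have : 0 < Fintype.card V := Fintype.card_pos_iff.mpr ⟨r⟩
    simp only [Set.mem_Icc, Set.mem_Iio]
    omega
  · have hvu : v ∈ subtree p u := hk.imp fun _ => And.right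
    exact rank_lt_rank (((ht.mem_subtree_iff hr hroot).mp hvu).1.lt_of_ne (hinj.ne huv))
end

section
/- Let $T$ be a spanning tree of a connected graph $G$ rooted at $r$, with preorder numbering $PN$ and subtree sizes $\mathrm{Size}$, so that the subtree of $v$ consists of the vertices with preorder numbers in $[PN(v), PN(v) + \mathrm{Size}(v) - 1]$. For a non-root vertex $v$, let $\mathrm{Low}(v)$ and $\mathrm{High}(v)$ be the minimum and maximum of $PN(v)$ together with the preorder numbers of all endpoints of non-tree edges $(u,w)$ of $G$ with $u$ in $v$'s subtree. Then the tree edge $(v, p(v))$ is a bridge of $G$ if and only if every non-tree edge with one endpoint in the subtree of $v$ has both endpoints in the subtree of $v$; equivalently, $(v,p(v))$ is a bridge iff $PN(v) \leq \mathrm{Low}(v)$ and $\mathrm{High}(v) \leq PN(v) + \mathrm{Size}(v) - 1$. -/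
private lemma aux_noCycle {V : Type*} (p : V → V) (r : V) (hr : p r = r)
    (hroot : ∀ v, ∃ k, p^[k] v = r) {x : V} (hx : x ≠ r) {n : ℕ} (hn : 0 < n)
    (h : p^[n] x = x) : False := by
  obtain ⟨m, hm⟩ := hroot x
  have hper : ∀ j, p^[j * n] x = x := by
    intro j
    induction j with
    | zero => simp
    | succ j ih =>
      rw [Nat.succ_mul, Function.iterate_add_apply, h, ih]
  have hfix : ∀ t, m ≤ t → p^[t] x = r := by
    intro t ht
    rw [← Nat.sub_add_cancel ht, Function.iterate_add_apply, hm,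
      Function.iterate_fixed hr]
  have h2 : p^[(m + 1) * n] x = r := by
    apply hfix
    calc m ≤ m + 1 := Nat.le_succ m
    _ ≤ (m + 1) * n := Nat.le_mul_of_pos_right _ hn
  rw [hper (m + 1)] at h2
  exact hx h2

private lemma aux_chain {V : Type*} (p : V → V) {G' : SimpleGraph V} :
    ∀ (m : ℕ) (x : V), (∀ i < m, G'.Adj (p^[i] x) (p (p^[i] x))) →
      G'.Reachable x (p^[m] x) := by
  intro m
  induction m with
  | zero => intro x _; rw [Function.iterate_zero_apply]
  | succ m ih =>
    intro x hadj
    have h1 : G'.Reachable x (p^[m] x) := ih x fun i hi => hadj i (Nat.lt_succ_of_lt hi)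
    have h2 : G'.Adj (p^[m] x) (p (p^[m] x)) := hadj m (Nat.lt_succ_self m)
    rw [Function.iterate_succ_apply']
    exact h1.trans h2.reachable

private lemma aux_cross {V : Type*} {G' : SimpleGraph V} (S : Set V) :
    ∀ {a b : V}, G'.Walk a b → a ∈ S → b ∉ S →
      ∃ x y, G'.Adj x y ∧ x ∈ S ∧ y ∉ S := by
  intro a b w
  induction w with
  | nil => intro ha hb; exact absurd ha hb
  | @cons a c b h q ih =>
    intro ha hb
    by_cases hc : c ∈ S
    · exact ih hc hb
    · exact ⟨a, c, h, ha, hc⟩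

/-- Bridge characterization via preorder numbers (Equation (1) of the
2-edge-connectivity algorithm). `p` is a spanning tree of the connected graph
`G` rooted at `r`, `PN` a preorder numbering whose restriction to each subtree
is the interval `[PN v, PN v + Size v - 1]`. `Low v`/`High v` are the min/max
of `PN v` together with the preorder numbers of endpoints of non-tree edges
incident to the subtree of `v`. Then the tree edge `(v, p v)` is a bridge iff
every non-tree edge touching `v`'s subtree stays inside it, iff
`PN v ≤ Low v` and `High v ≤ PN v + Size v - 1`. -/
theorem bridge_characterization {V : Type*} [Fintype V] [DecidableEq V]
    (G : SimpleGraph V) (hconn : G.Connected)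
    (r : V) (p : V → V) (hr : p r = r)
    (htree : ∀ v : V, v ≠ r → G.Adj v (p v))
    (hroot : ∀ v, ∃ k, p^[k] v = r)
    (PN : V → ℕ) (hinj : Function.Injective PN)
    (hinterval : ∀ v : V, PN '' {u | ∃ k, p^[k] u = v}
      = Set.Icc (PN v) (PN v + Nat.card {u | ∃ k, p^[k] u = v} - 1)) :
    ∀ v : V, v ≠ r →
      ((G.IsBridge s(v, p v) ↔
        ∀ u w : V, G.Adj u w → ¬(p u = w ∨ p w = u) →
          (∃ k, p^[k] u = v) → (∃ k, p^[k] w = v)) ∧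
      (G.IsBridge s(v, p v) ↔
        (PN v ≤ sInf ({PN v} ∪ {x | ∃ u w : V, x = PN w ∧ (∃ k, p^[k] u = v) ∧
            G.Adj u w ∧ ¬(p u = w ∨ p w = u)}) ∧
        sSup ({PN v} ∪ {x | ∃ u w : V, x = PN w ∧ (∃ k, p^[k] u = v) ∧
            G.Adj u w ∧ ¬(p u = w ∨ p w = u)})
          ≤ PN v + Nat.card {u | ∃ k, p^[k] u = v} - 1))) := by
  intro v hv
  have hGadj : G.Adj v (p v) := htree v hv
  have hcyc : ∀ n, 0 < n → p^[n] v ≠ v := fun n hn hc =>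
    aux_noCycle p r hr hroot hv hn hc
  have hppv : p (p v) ≠ v := by
    intro hc
    exact hcyc 2 (by norm_num) (by
      rw [show (2:ℕ) = 1 + 1 from rfl, Function.iterate_add_apply]
      simpa using hc)
  have hedge_ne : ∀ x : V, x ≠ v → s(x, p x) ≠ s(v, p v) := by
    intro x hx hc
    rw [Sym2.eq_iff] at hc
    rcases hc with ⟨h1, _⟩ | ⟨h1, h2⟩
    · exact hx h1
    · exact hppv (by rw [← h1]; exact h2)
  set G' := G \ SimpleGraph.fromEdgeSet {s(v, p v)} with hG'
  have hG'adj : ∀ x y : V, G.Adj x y → s(x, y) ≠ s(v, p v) → G'.Adj x y := by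
    intro x y hadj hne
    rw [hG', SimpleGraph.sdiff_adj, SimpleGraph.fromEdgeSet_adj]
    exact ⟨hadj, fun hc => hne hc.1⟩
  -- first equivalence
  have hiff1 : G.IsBridge s(v, p v) ↔
      ∀ u w : V, G.Adj u w → ¬(p u = w ∨ p w = u) →
        (∃ k, p^[k] u = v) → (∃ k, p^[k] w = v) := by
    constructor
    · intro hb u w hadj hnt hu
      by_contra hw
      rw [SimpleGraph.isBridge_iff] at hb
      apply hb
      -- build a walk from v to p v avoiding the edge
      have hk0 : p^[Nat.find hu] u = v := Nat.find_spec hu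
      have R1 : G'.Reachable u v := by
        have := aux_chain (G' := G') p (Nat.find hu) u ?_
        · rwa [hk0] at this
        intro i hi
        apply hG'adj
        · apply htree
          intro hc
          apply hv
          have : p^[Nat.find hu] u = r := by
            rw [← Nat.sub_add_cancel hi.le, Function.iterate_add_apply, hc,
              Function.iterate_fixed hr]
          rw [hk0] at this
          exact this
        · exact hedge_ne _ (Nat.find_min hu hi)
      have R2 : G'.Adj u w := by
        apply hG'adj u w hadj
        intro hc
        rw [Sym2.eq_iff] at hc
        rcases hc with ⟨h1, h2⟩ | ⟨h1, h2⟩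
        · exact hnt (Or.inl (by rw [h1, h2]))
        · exact hw ⟨0, h2⟩
      have hex3 : ∃ k, p^[k] w = r := hroot w
      have R3 : G'.Reachable w r := by
        have := aux_chain (G' := G') p (Nat.find hex3) w ?_
        · rwa [Nat.find_spec hex3] at this
        intro i hi
        apply hG'adj
        · exact htree _ (Nat.find_min hex3 hi)
        · apply hedge_ne
          intro hc
          exact hw ⟨i, hc⟩
      have hex4 : ∃ k, p^[k] (p v) = r := hroot (p v)
      have R4 : G'.Reachable (p v) r := by
        have := aux_chain (G' := G') p (Nat.find hex4) (p v) ?_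
        · rwa [Nat.find_spec hex4] at this
        intro i hi
        apply hG'adj
        · exact htree _ (Nat.find_min hex4 hi)
        · apply hedge_ne
          intro hc
          apply hcyc (i + 1) (Nat.succ_pos i)
          rw [Function.iterate_succ_apply]
          exact hc
      exact R1.symm.trans (R2.reachable.trans (R3.trans R4.symm))
    · intro hprop
      rw [SimpleGraph.isBridge_iff]
      change ¬ G'.Reachable v (p v)
      intro hre
      obtain ⟨wk⟩ := hre
      have hvmem : v ∈ {u : V | ∃ k, p^[k] u = v} := ⟨0, rfl⟩
      have hpv : p v ∉ {u : V | ∃ k, p^[k] u = v} := by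
        rintro ⟨k, hk⟩
        apply hcyc (k + 1) (Nat.succ_pos k)
        rw [Function.iterate_succ_apply]
        exact hk
      obtain ⟨x, y, hxy, hxS, hyS⟩ := aux_cross _ wk hvmem hpv
      rw [SimpleGraph.sdiff_adj, SimpleGraph.fromEdgeSet_adj] at hxy
      obtain ⟨hGxy, hnadj⟩ := hxy
      have hne : s(x, y) ≠ s(v, p v) := by
        intro hc
        exact hnadj ⟨hc, hGxy.ne⟩
      by_cases hcase : p x = y ∨ p y = x
      · rcases hcase with h1 | h1
        · -- tree edge x → p x = y, so x = v
          obtain ⟨k, hk⟩ := hxS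
          have hxv : x = v := by
            cases k with
            | zero => exact hk
            | succ k =>
              exfalso
              apply hyS
              rw [Function.iterate_succ_apply, h1] at hk
              exact ⟨k, hk⟩
          apply hne
          rw [hxv, ← h1, hxv]
        · -- p y = x: then y in subtree
          apply hyS
          obtain ⟨k, hk⟩ := hxS
          exact ⟨k + 1, by rw [Function.iterate_succ_apply, h1]; exact hk⟩
      · exact hyS (hprop x y hGxy hcase hxS)
  refine ⟨hiff1, hiff1.trans ?_⟩
  -- second equivalence
  set S : Set ℕ := {PN v} ∪ {x | ∃ u w : V, x = PN w ∧ (∃ k, p^[k] u = v) ∧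
      G.Adj u w ∧ ¬(p u = w ∨ p w = u)} with hS
  have hSne : S.Nonempty := ⟨PN v, Or.inl rfl⟩
  have hSbdd : BddAbove S := by
    apply Set.Finite.bddAbove
    apply (Set.finite_range PN).subset
    rintro x (hx | ⟨u, w, rfl, _⟩)
    · exact ⟨v, hx.symm⟩
    · exact ⟨w, rfl⟩
  have hmemIcc : ∀ w : V, (∃ k, p^[k] w = v) ↔
      PN w ∈ Set.Icc (PN v) (PN v + Nat.card {u : V | ∃ k, p^[k] u = v} - 1) := by
    intro w
    rw [← hinterval v]
    constructor
    · intro hw; exact ⟨w, hw, rfl⟩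
    · rintro ⟨w', hw', heq⟩
      rwa [hinj heq] at hw'
  constructor
  · intro hprop
    constructor
    · apply le_csInf hSne
      rintro b (hb | ⟨u, w, rfl, hu, hadj, hnt⟩)
      · exact hb.symm.le
      · exact (Set.mem_Icc.mp ((hmemIcc w).mp (hprop u w hadj hnt hu))).1
    · apply csSup_le hSne
      rintro b (hb | ⟨u, w, rfl, hu, hadj, hnt⟩)
      · rw [hb]
        exact (Set.mem_Icc.mp ((hmemIcc v).mp ⟨0, rfl⟩)).2
      · exact (Set.mem_Icc.mp ((hmemIcc w).mp (hprop u w hadj hnt hu))).2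
  · rintro ⟨h1, h2⟩ u w hadj hnt hu
    have hmem : PN w ∈ S := Or.inr ⟨u, w, rfl, hu, hadj, hnt⟩
    have l1 : sInf S ≤ PN w := Nat.sInf_le hmem
    have l2 : PN w ≤ sSup S := le_csSup hSbdd hmem
    exact (hmemIcc w).mpr (Set.mem_Icc.mpr ⟨h1.trans l1, l2.trans h2⟩)
end

section
/- Let $G$ be a connected weighted graph with distinct edge weights, and let $F^*$ be its unique minimum spanning tree. Suppose in one phase, each vertex $v$ computes via Prim's algorithm a set $E(v)$ of MST edges (edges of $F^*$) and the graph $G_C$ is updated by contracting vertex sets that are connected via edges in $\bigcup_v E(v)$. Then: (1) every edge in $\bigcup_v E(v)$ belongs to $F^*$; and (2) every edge of $F^*$ not in $\bigcup_v E(v)$ survives in the contracted graph $G_C$, i.e., its two endpoints lie in different contracted super-vertices. -/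
/-!
A committed edge is, when it is added, a lightest edge of `G` leaving the current local tree, so
the cut property puts it in `F*`: otherwise exchange it for the edge where the `F*`-path between
its endpoints crosses the same cut; this gives a spanning tree that is no heavier, so by
minimality and distinctness of weights the two edges coincide. An uncommitted edge of `F*` is a
bridge of the tree `F*`, and all committed edges lie in `F*` minus that edge, so they cannot
join its endpoints.
-/

/-- The set of vertices spanned by a local Prim tree grown from `v` along the
list of edges `es`. -/
def primVerts {V : Type*} (v : V) (es : List (Sym2 V)) : Set V :=
  insert v {x | ∃ e ∈ es, x ∈ e}

open SimpleGraph

namespace SimpleGraph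

variable {V : Type*} {G : SimpleGraph V}

lemma edgeSet_fromEdgeSet_of_subset {s : Set (Sym2 V)} (hs : s ⊆ G.edgeSet) :
    (fromEdgeSet s).edgeSet = s := by
  rw [edgeSet_fromEdgeSet, sdiff_eq_left]
  exact Set.disjoint_left.mpr fun e he => G.not_isDiag_of_mem_edgeSet (hs he)

lemma isTree_fromEdgeSet_of_card_eq [Fintype V] {F : Finset (Sym2 V)} (hF : ↑F ⊆ G.edgeSet)
    (hconn : (fromEdgeSet (F : Set (Sym2 V))).Connected) (hcard : F.card = Fintype.card V - 1) :
    (fromEdgeSet (F : Set (Sym2 V))).IsTree := by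
  have : Nonempty V := hconn.nonempty
  refine isTree_iff_connected_and_card.mpr ⟨hconn, ?_⟩
  rw [edgeSet_fromEdgeSet_of_subset hF, Nat.card_coe_set_eq, Set.ncard_coe_finset, hcard,
    Nat.card_eq_fintype_card]
  have := Fintype.card_pos (α := V)
  omega

lemma Walk.exists_boundary_edge_reachable_deleteEdges (S : Set V) {x y : V} (w : G.Walk x y)
    (hw : w.edges.Nodup) (hx : x ∈ S) (hy : y ∉ S) :
    ∃ c d, G.Adj c d ∧ c ∈ S ∧ d ∉ S ∧ s(c, d) ∈ w.edges ∧
      (G.deleteEdges {s(c, d)}).Reachable x c ∧ (G.deleteEdges {s(c, d)}).Reachable d y := by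
  induction w with
  | nil => exact absurd hx hy
  | @cons x z y hxz p ih =>
    rw [Walk.edges_cons, List.nodup_cons] at hw
    by_cases hz : z ∈ S
    · obtain ⟨c, d, hcd, hc, hd, hcdp, hxc, hdy⟩ := ih hw.2 hz hy
      have hne : s(x, z) ≠ s(c, d) := fun h => hw.1 (h ▸ hcdp)
      refine ⟨c, d, hcd, hc, hd, List.mem_cons_of_mem _ hcdp, ?_, hdy⟩
      exact (deleteEdges_adj.mpr ⟨hxz, hne⟩).reachable.trans hxc
    · exact ⟨x, z, hxz, hx, hz, List.mem_cons_self, .refl x, (p.toDeleteEdge _ hw.1).reachable⟩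

end SimpleGraph

section

variable {V : Type*} [Fintype V]

structure IsMinSpanningTree (G : SimpleGraph V) (wt : Sym2 V → ℝ) (F : Finset (Sym2 V)) :
    Prop where
  subset_edgeSet : ↑F ⊆ G.edgeSet
  connected : (fromEdgeSet (F : Set (Sym2 V))).Connected
  card_eq : F.card = Fintype.card V - 1
  sum_le : ∀ F' : Finset (Sym2 V), ↑F' ⊆ G.edgeSet → (fromEdgeSet (F' : Set (Sym2 V))).Connected →
    F'.card = Fintype.card V - 1 → ∑ e ∈ F, wt e ≤ ∑ e ∈ F', wt e

namespace IsMinSpanningTree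

variable {G : SimpleGraph V} {wt : Sym2 V → ℝ} {F : Finset (Sym2 V)}

lemma wt_le_of_exchange [DecidableEq V] (hF : IsMinSpanningTree G wt F) {e e' : Sym2 V}
    (he : e ∈ F) (he' : e' ∈ G.edgeSet) (he'F : e' ∉ F)
    (hconn : (fromEdgeSet (↑(insert e' (F.erase e)) : Set (Sym2 V))).Connected) : wt e ≤ wt e' := by
  have hnotin : e' ∉ F.erase e := fun h => he'F (Finset.mem_of_mem_erase h)
  have hsub : ↑(insert e' (F.erase e)) ⊆ G.edgeSet := by
    rw [Finset.coe_insert, Finset.coe_erase]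
    exact Set.insert_subset he' (Set.sdiff_subset.trans hF.subset_edgeSet)
  have hcard : (insert e' (F.erase e)).card = Fintype.card V - 1 := by
    rw [Finset.card_insert_of_notMem hnotin, Finset.card_erase_add_one he, hF.card_eq]
  have hle := hF.sum_le _ hsub hconn hcard
  rw [Finset.sum_insert hnotin, ← Finset.add_sum_erase F wt he] at hle
  linarith

lemma mem_of_lightest_crossing (hF : IsMinSpanningTree G wt F)
    (hdistinct : ∀ e ∈ G.edgeSet, ∀ e' ∈ G.edgeSet, wt e = wt e' → e = e')
    (S : Set V) {a b : V} (hab : s(a, b) ∈ G.edgeSet) (ha : a ∈ S) (hb : b ∉ S)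
    (hmin : ∀ e' ∈ G.edgeSet, (∃ c d : V, e' = s(c, d) ∧ c ∈ S ∧ d ∉ S) → wt s(a, b) ≤ wt e') :
    s(a, b) ∈ F := by
  classical
  by_contra habF
  obtain ⟨p⟩ := hF.connected.preconnected a b
  obtain ⟨c, d, hcd, hc, hd, -, hac, hdb⟩ :=
    p.toPath.1.exists_boundary_edge_reachable_deleteEdges S p.toPath.2.edges_nodup ha hb
  have hcdF : s(c, d) ∈ F := (fromEdgeSet_adj _).mp hcd |>.1
  have hne : s(a, b) ≠ s(c, d) := fun h => habF (h ▸ hcdF)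
  -- `c`, `a`, `b`, `d` are joined in `F ∪ {ab}` avoiding `cd`, so `cd` is not a bridge there
  set H := fromEdgeSet (insert s(a, b) (F : Set (Sym2 V)))
  have hle : (fromEdgeSet (F : Set (Sym2 V))).deleteEdges {s(c, d)} ≤ H.deleteEdges {s(c, d)} :=
    deleteEdges_mono (fromEdgeSet_mono (Set.subset_insert _ _))
  have hab' : (H.deleteEdges {s(c, d)}).Adj a b :=
    deleteEdges_adj.mpr ⟨(fromEdgeSet_adj _).mpr ⟨Set.mem_insert _ _, G.ne_of_adj hab⟩, hne⟩
  have hcd' : (H.deleteEdges {s(c, d)}).Reachable c d :=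
    (hac.mono hle).symm.trans (hab'.reachable.trans (hdb.mono hle).symm)
  have hconn : (fromEdgeSet (↑(insert s(a, b) (F.erase s(c, d))) : Set (Sym2 V))).Connected := by
    have hH : H.Connected := hF.connected.mono (fromEdgeSet_mono (Set.subset_insert _ _))
    convert hH.connected_delete_edge_of_not_isBridge (not_not.mpr hcd') using 1
    rw [deleteEdges_fromEdgeSet, Finset.coe_insert, Finset.coe_erase,
      Set.insert_sdiff_of_notMem _ (Set.notMem_singleton_iff.mpr hne)]
  have hexch := hF.wt_le_of_exchange hcdF hab habF hconn
  have hmin' := hmin _ (hF.subset_edgeSet hcdF) ⟨c, d, rfl, hc, hd⟩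
  exact hne (hdistinct _ hab _ (hF.subset_edgeSet hcdF) (le_antisymm hmin' hexch))

end IsMinSpanningTree

end

theorem msf_local_prim_correct_general {V : Type*} [Fintype V] [DecidableEq V]
    (G : SimpleGraph V)
    (wt : Sym2 V → ℝ)
    (hdistinct : ∀ e ∈ G.edgeSet, ∀ e' ∈ G.edgeSet, wt e = wt e' → e = e')
    (Fstar : Finset (Sym2 V))
    (hFsub : ↑Fstar ⊆ G.edgeSet)
    (hFconn : (SimpleGraph.fromEdgeSet (↑Fstar : Set (Sym2 V))).Connected)
    (hFcard : Fstar.card = Fintype.card V - 1)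
    (hFmin : ∀ F' : Finset (Sym2 V), ↑F' ⊆ G.edgeSet →
      (SimpleGraph.fromEdgeSet (↑F' : Set (Sym2 V))).Connected →
      F'.card = Fintype.card V - 1 →
      ∑ e ∈ Fstar, wt e ≤ ∑ e ∈ F', wt e)
    (Ev : V → Finset (Sym2 V))
    (hPrim : ∀ v : V, ∃ l : List (Sym2 V), l.toFinset = Ev v ∧ l.Nodup ∧
      ∀ (j : ℕ) (hj : j < l.length),
        l.get ⟨j, hj⟩ ∈ G.edgeSet ∧
        (∃ a b : V, l.get ⟨j, hj⟩ = s(a, b) ∧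
          a ∈ primVerts v (l.take j) ∧ b ∉ primVerts v (l.take j)) ∧
        ∀ e' ∈ G.edgeSet,
          (∃ a b : V, e' = s(a, b) ∧
            a ∈ primVerts v (l.take j) ∧ b ∉ primVerts v (l.take j)) →
          wt (l.get ⟨j, hj⟩) ≤ wt e') :
    (∀ v : V, Ev v ⊆ Fstar) ∧
    (∀ e ∈ Fstar, e ∉ (⋃ v : V, (↑(Ev v) : Set (Sym2 V))) →
      ∀ a b : V, e = s(a, b) →
        ¬ (SimpleGraph.fromEdgeSet (⋃ v : V, (↑(Ev v) : Set (Sym2 V)))).Reachable a b) := by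
  have hF : IsMinSpanningTree G wt Fstar := ⟨hFsub, hFconn, hFcard, hFmin⟩
  have hcommitted : ∀ v : V, Ev v ⊆ Fstar := by
    intro v e he
    obtain ⟨l, hl, -, hstep⟩ := hPrim v
    obtain ⟨⟨j, hj⟩, rfl⟩ := List.mem_iff_get.mp (List.mem_toFinset.mp (hl ▸ he))
    obtain ⟨hG, ⟨a, b, hab, ha, hb⟩, hmin⟩ := hstep j hj
    rw [hab] at hG hmin ⊢
    exact hF.mem_of_lightest_crossing hdistinct _ hG ha hb hmin
  refine ⟨hcommitted, ?_⟩
  rintro e he heU a b rfl hreach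
  have hbridge := isAcyclic_iff_forall_adj_isBridge.mp (isTree_fromEdgeSet_of_card_eq hFsub hFconn hFcard).isAcyclic
    ((fromEdgeSet_adj _).mpr ⟨he, G.ne_of_adj (hFsub he)⟩)
  refine isBridge_iff.mp hbridge (hreach.mono ?_)
  rw [deleteEdges_fromEdgeSet]
  refine fromEdgeSet_mono (Set.iUnion_subset fun v e' he' => ⟨hcommitted v he', ?_⟩)
  rintro rfl
  exact heU (Set.mem_iUnion_of_mem v he')

/-- Correctness of the local-Prim phase of the AMPC MSF algorithm. `G` is a
connected weighted graph with distinct edge weights and unique minimum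
spanning tree `Fstar`. Each vertex `v` runs Prim's algorithm locally,
committing a list of edges each of which is, at the time of its addition, a
minimum-weight edge of `G` leaving the current local tree. Then (1) every
committed edge lies in `Fstar`, and (2) every edge of `Fstar` not committed
survives the contraction along committed edges: its endpoints are not
connected by committed edges. -/
theorem msf_local_prim_correct {V : Type*} [Fintype V] [DecidableEq V]
    (G : SimpleGraph V) (hconn : G.Connected)
    (wt : Sym2 V → ℝ)
    (hdistinct : ∀ e ∈ G.edgeSet, ∀ e' ∈ G.edgeSet, wt e = wt e' → e = e')
    (Fstar : Finset (Sym2 V))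
    (hFsub : ↑Fstar ⊆ G.edgeSet)
    (hFconn : (SimpleGraph.fromEdgeSet (↑Fstar : Set (Sym2 V))).Connected)
    (hFcard : Fstar.card = Fintype.card V - 1)
    (hFmin : ∀ F' : Finset (Sym2 V), ↑F' ⊆ G.edgeSet →
      (SimpleGraph.fromEdgeSet (↑F' : Set (Sym2 V))).Connected →
      F'.card = Fintype.card V - 1 →
      ∑ e ∈ Fstar, wt e ≤ ∑ e ∈ F', wt e)
    (Ev : V → Finset (Sym2 V))
    (hPrim : ∀ v : V, ∃ l : List (Sym2 V), l.toFinset = Ev v ∧ l.Nodup ∧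
      ∀ (j : ℕ) (hj : j < l.length),
        l.get ⟨j, hj⟩ ∈ G.edgeSet ∧
        (∃ a b : V, l.get ⟨j, hj⟩ = s(a, b) ∧
          a ∈ primVerts v (l.take j) ∧ b ∉ primVerts v (l.take j)) ∧
        ∀ e' ∈ G.edgeSet,
          (∃ a b : V, e' = s(a, b) ∧
            a ∈ primVerts v (l.take j) ∧ b ∉ primVerts v (l.take j)) →
          wt (l.get ⟨j, hj⟩) ≤ wt e') :
    (∀ v : V, Ev v ⊆ Fstar) ∧
    (∀ e ∈ Fstar, e ∉ (⋃ v : V, (↑(Ev v) : Set (Sym2 V))) →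
      ∀ a b : V, e = s(a, b) →
        ¬ (SimpleGraph.fromEdgeSet (⋃ v : V, (↑(Ev v) : Set (Sym2 V)))).Reachable a b) :=
  msf_local_prim_correct_general G wt hdistinct Fstar hFsub hFconn hFcard hFmin Ev hPrim
end

section
/- Let $v_0, \ldots, v_{k-1}$ be the vertices of a cycle, and let $\pi$ be any permutation (priority assignment) on them. Suppose each vertex $u$ traverses the cycle in the same fixed direction until it reaches the first vertex $w$ with $\pi(w) < \pi(u)$, and is assigned label $w$ (the vertex of minimum $\pi$-value traverses the whole cycle and labels itself). Then iterating the labeling map (following labels) from any vertex reaches the unique vertex of minimum $\pi$-value on the cycle; in particular, two vertices lie on the same cycle if and only if iterating labels from each reaches the same minimum-priority representative. -/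
/-!
Each labelling step stays on the cycle of `u` and, unless `u` is already the minimum of its cycle,
strictly decreases the priority: on a finite cycle every smaller vertex lies ahead of `u`, so the
search for one succeeds. Iterating labels therefore descends to a cycle minimum, which labels
itself, and injectivity of `π` makes that minimum the same for all vertices of the cycle.
-/

/-- The label of `u`: traverse the cycle structure (permutation `σ`) in the
fixed direction from `u` until reaching the first vertex of smaller priority
`π`; the minimum-priority vertex of its cycle traverses the whole cycle and
labels itself. -/
noncomputable def cycleLabel {V : Type*} (σ : Equiv.Perm V) (π : V → ℕ) (u : V) : V :=
  letI := Classical.dec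
  if _h : {j : ℕ | 1 ≤ j ∧ π ((σ ^ j) u) < π u}.Nonempty
  then (σ ^ sInf {j : ℕ | 1 ≤ j ∧ π ((σ ^ j) u) < π u}) u
  else u

section

variable {V : Type*} (σ : Equiv.Perm V) (π : V → ℕ)

def IsCycleMin (r : V) : Prop :=
  ∀ w, σ.SameCycle r w → π r ≤ π w

variable {σ π}

theorem IsCycleMin.eq_of_sameCycle (hπ : Function.Injective π) {r s : V}
    (hr : IsCycleMin σ π r) (hs : IsCycleMin σ π s) (hrs : σ.SameCycle r s) : r = s :=
  hπ (le_antisymm (hr s hrs) (hs r hrs.symm))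

theorem cycleLabel_eq_self_of_isCycleMin {u : V} (hu : IsCycleMin σ π u) :
    cycleLabel σ π u = u := by
  unfold cycleLabel
  rw [dif_neg]
  rintro ⟨j, -, hj⟩
  exact (hu _ (Equiv.Perm.sameCycle_pow_right.2 (.refl _ _))).not_gt hj

theorem cycleLabel_lt_of_sameCycle [Finite V] {u w : V} (huw : σ.SameCycle u w)
    (hlt : π w < π u) : π (cycleLabel σ π u) < π u := by
  obtain ⟨i, hi, -, rfl⟩ := huw.exists_pow_eq''
  have hne : {j : ℕ | 1 ≤ j ∧ π ((σ ^ j) u) < π u}.Nonempty := ⟨i, hi, hlt⟩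
  unfold cycleLabel
  rw [dif_pos hne]
  exact (Nat.sInf_mem hne).2

variable (σ π)

theorem sameCycle_cycleLabel (u : V) : σ.SameCycle u (cycleLabel σ π u) := by
  unfold cycleLabel
  split
  · exact Equiv.Perm.sameCycle_pow_right.2 (.refl _ _)
  · exact Equiv.Perm.SameCycle.refl _ _

theorem sameCycle_iterate_cycleLabel (u : V) (m : ℕ) :
    σ.SameCycle u ((cycleLabel σ π)^[m] u) := by
  induction m with
  | zero => exact Equiv.Perm.SameCycle.refl _ _
  | succ m ih =>
    rw [Function.iterate_succ_apply']
    exact ih.trans (sameCycle_cycleLabel σ π _)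

theorem exists_isCycleMin_iterate_cycleLabel [Finite V] (u : V) :
    ∃ m, IsCycleMin σ π ((cycleLabel σ π)^[m] u) := by
  induction u using (measure π).wf.induction with
  | _ u ih =>
  by_cases hmin : IsCycleMin σ π u
  · exact ⟨0, hmin⟩
  obtain ⟨w, huw, hlt⟩ : ∃ w, σ.SameCycle u w ∧ π w < π u := by
    simpa [IsCycleMin] using hmin
  obtain ⟨m, hm⟩ := ih _ (cycleLabel_lt_of_sameCycle huw hlt)
  exact ⟨m + 1, hm⟩

end

/-- Correctness of the cycle-connectivity labeling step: iterating the
labeling map from any vertex reaches the unique minimum-priority vertex of its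
cycle; in particular two vertices lie on the same cycle iff iterating labels
from each reaches the same fixed representative. -/
theorem cycleLabel_correct {V : Type*} [Fintype V]
    (σ : Equiv.Perm V) (π : V → ℕ) (hπ : Function.Injective π) :
    (∀ u : V, ∃ m : ℕ,
      σ.SameCycle u ((cycleLabel σ π)^[m] u) ∧
      ∀ w : V, σ.SameCycle u w → π ((cycleLabel σ π)^[m] u) ≤ π w) ∧
    (∀ u v : V, σ.SameCycle u v ↔
      ∃ (r : V) (m₁ m₂ : ℕ), (cycleLabel σ π)^[m₁] u = r ∧
        (cycleLabel σ π)^[m₂] v = r ∧ cycleLabel σ π r = r) := by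
  have reach := exists_isCycleMin_iterate_cycleLabel σ π
  have stay := sameCycle_iterate_cycleLabel σ π
  refine ⟨fun u => ?_, fun u v => ⟨fun huv => ?_, ?_⟩⟩
  · obtain ⟨m, hm⟩ := reach u
    exact ⟨m, stay u m, fun w huw => hm w ((stay u m).symm.trans huw)⟩
  · obtain ⟨m₁, h₁⟩ := reach u
    obtain ⟨m₂, h₂⟩ := reach v
    have hr := h₂.eq_of_sameCycle hπ h₁
      (((stay v m₂).symm.trans huv.symm).trans (stay u m₁))
    exact ⟨_, m₁, m₂, rfl, hr, cycleLabel_eq_self_of_isCycleMin h₁⟩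
  · rintro ⟨r, m₁, m₂, rfl, h₂, -⟩
    exact (stay u m₁).trans (h₂ ▸ stay v m₂).symm
end

section
/- Let $G$ be a disjoint union of cycles with $n$ vertices. Suppose each vertex is independently marked with probability $p = n^{-\epsilon/2}$ where $\epsilon \in (0,1)$ and $n^{\epsilon/2} \geq 3 c \ln n$ for a constant $c$. Then with probability at least $1 - n^{1-c}$, simultaneously for every cycle of length $k \geq n^{\epsilon}$, the number of marked vertices on that cycle is at most $2kp$, and moreover every cycle of length $k \geq n^{\epsilon}$ contains at least one marked vertex. -/
/-!
Fix a vertex whose cycle has `k ≥ n^ε` vertices, so that `kp ≥ n^(ε/2) ≥ 3c ln n`, and let `X` be the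
number of marked vertices on it. By independence `E[2^X] = (1 + p)^k`, so Markov's inequality gives
`P(X ≥ 2kp) ≤ (1 + p)^k / 2^(2kp) ≤ e^(-(2 ln 2 - 1)kp)`, while the cycle is unmarked with probability
`(1 - p)^k ≤ e^(-kp)`. Whenever `n^(1-c) < 1` and there is a vertex, the hypotheses force `c > 1` and
`n ≥ 3`, and then these two bounds add up to at most `n^(-c)`; a union bound over the `n` vertices
concludes.
-/

open MeasureTheory Finset Real
open scoped NNReal

set_option linter.deprecated false

theorem integral_finset_prod_eq_pow {ι α : Type*} [Fintype ι] [MeasurableSpace α]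
    (ν : Measure α) [IsProbabilityMeasure ν] (a : α → ℝ) (S : Finset ι) :
    ∫ x, ∏ i ∈ S, a (x i) ∂Measure.pi (fun _ : ι => ν) = (∫ y, a y ∂ν) ^ #S := by
  classical
  have h := integral_fintype_prod_eq_prod (μ := fun _ : ι => ν)
    (fun i y => if i ∈ S then a y else 1)
  simp only [prod_ite_mem, univ_inter] at h
  rw [h, ← prod_subset (subset_univ S) fun i _ hi => by simp [hi], ← prod_const]
  exact prod_congr rfl fun i hi => by simp [hi]

theorem integral_bernoulli {r : ℝ≥0} (hr : r ≤ 1) (a : Bool → ℝ) :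
    ∫ b, a b ∂(PMF.bernoulli r hr).toMeasure = r * a true + (1 - r) * a false := by
  rw [PMF.integral_eq_sum, Fintype.sum_bool]
  simp [PMF.bernoulli_apply,
    ENNReal.toReal_sub_of_le (ENNReal.coe_le_one_iff.2 hr) ENNReal.one_ne_top]

theorem one_add_pow_div_two_rpow_le {x : ℝ} (hx : 0 ≤ x) (k : ℕ) :
    (1 + x) ^ k / 2 ^ (2 * k * x) ≤ exp (-(2 * log 2 - 1) * (k * x)) := by
  have hnum : (1 + x) ^ k ≤ exp (k * x) := by
    rw [exp_nat_mul]
    exact pow_le_pow_left₀ (by linarith) (by linarith [add_one_le_exp x]) k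
  rw [rpow_def_of_pos two_pos, div_le_iff₀ (exp_pos _), ← exp_add]
  exact hnum.trans_eq (congrArg exp (by ring))

theorem one_sub_pow_le_exp_neg_mul {x : ℝ} (hx : x ≤ 1) (k : ℕ) :
    (1 - x) ^ k ≤ exp (-(k * x)) := by
  calc (1 - x) ^ k ≤ exp (-x) ^ k := pow_le_pow_left₀ (by linarith) (one_sub_le_exp_neg x) k
    _ = _ := by rw [← exp_nat_mul, mul_neg]

theorem exp_neg_add_exp_neg_le_exp_neg {y : ℝ} (hy : log 3 ≤ y) :
    exp (-(2 * log 2 - 1) * (3 * y)) + exp (-(3 * y)) ≤ exp (-y) := by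
  have hlog2 := log_two_gt_d9
  have hlog3 : 1 ≤ log 3 := by
    rw [le_log_iff_exp_le (by norm_num)]
    linarith [exp_one_lt_d9]
  set a := 6 * log 2 - 4
  have hfirst : exp (-a * y) ≤ 20 / 23 := by
    rw [neg_mul, exp_neg, inv_le_comm₀ (exp_pos _) (by norm_num)]
    nlinarith [add_one_le_exp (a * y)]
  have hsecond : exp (-(2 * y)) ≤ 1 / 9 := by
    calc exp (-(2 * y)) ≤ exp (-(2 * log 3)) := exp_le_exp.2 (by linarith)
      _ = 1 / 9 := by
        rw [neg_mul_eq_neg_mul, mul_comm, exp_mul, exp_log (by norm_num)]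
        norm_num
  calc exp (-(2 * log 2 - 1) * (3 * y)) + exp (-(3 * y))
      = exp (-y) * (exp (-a * y) + exp (-(2 * y))) := by
        rw [mul_add, ← exp_add, ← exp_add]
        congr 2 <;> ring
    _ ≤ exp (-y) * 1 := by gcongr; linarith
    _ = exp (-y) := mul_one _

theorem one_lt_and_three_le_of_rpow_lt_one {n : ℕ} {ε c : ℝ} (hn : 1 ≤ n) (hε1 : ε < 1)
    (hlarge : 3 * c * log n ≤ (n : ℝ) ^ (ε / 2)) (hlt : (n : ℝ) ^ (1 - c) < 1) :
    1 < c ∧ 3 ≤ n := by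
  have hc : 1 < c := by
    by_contra! hc
    exact (one_le_rpow (by exact_mod_cast hn) (by linarith)).not_gt hlt
  refine ⟨hc, ?_⟩
  by_contra! hn3
  interval_cases n
  · simp at hlt
  · have h2 : (2 : ℝ) ^ (ε / 2) < 2 ^ (1 : ℝ) :=
      rpow_lt_rpow_of_exponent_lt (by norm_num) (by linarith)
    push_cast at hlarge
    nlinarith [log_two_gt_d9]

theorem one_sub_card_mul_le_measureReal_forall {Ω ι : Type*} [MeasurableSpace Ω] [Fintype ι]
    (μ : Measure Ω) [IsProbabilityMeasure μ] {P : ι → Ω → Prop}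
    (hP : MeasurableSet {ω | ∀ i, P i ω}) {δ : ℝ} (hδ : ∀ i, μ.real {ω | ¬P i ω} ≤ δ) :
    1 - Fintype.card ι * δ ≤ μ.real {ω | ∀ i, P i ω} := by
  have hcompl : {ω | ∀ i, P i ω}ᶜ = ⋃ i, {ω | ¬P i ω} := by
    ext ω
    simp
  have hunion := measureReal_iUnion_fintype_le (μ := μ) fun i => {ω | ¬P i ω}
  have hsum : ∑ i, μ.real {ω | ¬P i ω} ≤ Fintype.card ι * δ := by
    simpa using sum_le_sum fun i (_ : i ∈ univ) => hδ i
  have := probReal_compl_eq_one_sub (μ := μ) hP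
  rw [hcompl] at this
  linarith

section Sampling

variable {V : Type*} [Fintype V]

noncomputable abbrev bernoulliPi (r : ℝ≥0) (hr : r ≤ 1) : Measure (V → Bool) :=
  Measure.pi fun _ => (PMF.bernoulli r hr).toMeasure

def WellSampled (s : V → Prop) (q : ℝ) (f : V → Bool) : Prop :=
  (Nat.card {w | s w ∧ f w = true} : ℝ) ≤ 2 * Nat.card {w | s w} * q ∧ ∃ w, s w ∧ f w = true

variable {r : ℝ≥0} (hr : r ≤ 1)

theorem bernoulliPi_integral_prod (S : Finset V) (a : Bool → ℝ) :
    ∫ f, ∏ v ∈ S, a (f v) ∂bernoulliPi r hr = (r * a true + (1 - r) * a false) ^ #S := by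
  rw [bernoulliPi, integral_finset_prod_eq_pow, integral_bernoulli]

theorem bernoulliPi_le_card_filter (S : Finset V) (m : ℝ) :
    (bernoulliPi r hr).real {f | m ≤ #(S.filter fun v => f v = true)} ≤
      (1 + r) ^ #S / 2 ^ m := by
  have hmarkov := (mul_meas_ge_le_integral_of_nonneg (μ := bernoulliPi r hr)
    (f := fun f => ∏ v ∈ S, if f v then (2 : ℝ) else 1)
    (Filter.Eventually.of_forall fun f => prod_nonneg fun v _ => by split_ifs <;> norm_num)
    Integrable.of_finite (2 ^ m)).trans_eq
    (bernoulliPi_integral_prod hr S fun b => if b then 2 else 1)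
  have hsub : {f : V → Bool | m ≤ #(S.filter fun v => f v = true)} ⊆
      {f | (2 : ℝ) ^ m ≤ ∏ v ∈ S, if f v then (2 : ℝ) else 1} := by
    intro f hf
    simp only [Set.mem_setOf_eq, prod_ite, prod_const, one_pow, mul_one] at hf ⊢
    rw [← rpow_natCast]
    exact rpow_le_rpow_of_exponent_le (by norm_num) hf
  rw [le_div_iff₀ (by positivity), mul_comm]
  calc (2 : ℝ) ^ m * (bernoulliPi r hr).real _ ≤ 2 ^ m * (bernoulliPi r hr).real _ :=
        mul_le_mul_of_nonneg_left (measureReal_mono hsub) (by positivity)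
    _ ≤ _ := hmarkov.trans_eq (by simp only [↓reduceIte, Bool.false_eq_true, mul_one]; ring)

theorem bernoulliPi_forall_false (S : Finset V) :
    (bernoulliPi r hr).real {f | ∀ v ∈ S, f v = false} = (1 - r) ^ #S := by
  rw [← integral_indicator_one (Set.toFinite _).measurableSet]
  calc _ = ∫ f, ∏ v ∈ S, (if f v = false then (1 : ℝ) else 0) ∂bernoulliPi r hr := by
        congr 1 with f
        simp [Set.indicator_apply, prod_boole]
    _ = _ := (bernoulliPi_integral_prod hr S fun b => if b = false then 1 else 0).trans (by simp)

theorem bernoulliPi_not_wellSampled_le (s : V → Prop) :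
    (bernoulliPi r hr).real {f | ¬WellSampled s r f} ≤
      exp (-(2 * log 2 - 1) * (Nat.card {w | s w} * r)) + exp (-(Nat.card {w | s w} * r)) := by
  classical
  set S := univ.filter s
  have hk : Nat.card {w | s w} = #S := by simp [S]
  have hcount (f : V → Bool) :
      Nat.card {w | s w ∧ f w = true} = #(S.filter fun w => f w = true) := by
    simp [S, filter_filter]
  have hsub : {f | ¬WellSampled s r f} ⊆
      {f | 2 * #S * (r : ℝ) ≤ #(S.filter fun w => f w = true)} ∪ {f | ∀ w ∈ S, f w = false} := by
    intro f hf
    simp only [WellSampled, Set.mem_setOf_eq, not_and_or, not_le, not_exists, hk, hcount] at hf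
    rcases hf with hmany | hnone
    · exact Or.inl hmany.le
    · exact Or.inr fun w hw => by simpa using (hnone w).resolve_left (by simpa [S] using hw)
  rw [hk]
  calc _ ≤ _ := measureReal_mono hsub
    _ ≤ _ := measureReal_union_le _ _
    _ ≤ _ := add_le_add
        ((bernoulliPi_le_card_filter hr S _).trans (one_add_pow_div_two_rpow_le r.2 _))
        ((bernoulliPi_forall_false hr S).trans_le
          (one_sub_pow_le_exp_neg_mul (by exact_mod_cast hr) _))

theorem bernoulliPi_long_not_wellSampled_le (s : V → Prop) {n : ℕ} {ε c : ℝ} (hn : 1 ≤ n)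
    (hε1 : ε < 1) (hlarge : 3 * c * log n ≤ (n : ℝ) ^ (ε / 2))
    (hr_eq : (r : ℝ) = (n : ℝ) ^ (-(ε / 2))) (hlt : (n : ℝ) ^ (1 - c) < 1) :
    (bernoulliPi r hr).real {f | ¬((n : ℝ) ^ ε ≤ Nat.card {w | s w} → WellSampled s r f)} ≤
      (n : ℝ) ^ (-c) := by
  obtain ⟨hc, hn3⟩ := one_lt_and_three_le_of_rpow_lt_one hn hε1 hlarge hlt
  have hn0 : (0 : ℝ) < n := by positivity
  by_cases hlong : (n : ℝ) ^ ε ≤ Nat.card {w | s w}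
  swap
  · calc _ ≤ (bernoulliPi r hr).real ∅ :=
          measureReal_mono (by intro f hf; exact hf fun h => absurd h hlong)
      _ ≤ _ := by rw [measureReal_empty]; positivity
  have hmarks : 3 * (c * log n) ≤ Nat.card {w | s w} * (r : ℝ) := by
    calc 3 * (c * log n) = 3 * c * log n := by ring
      _ ≤ (n : ℝ) ^ (ε / 2) := hlarge
      _ = (n : ℝ) ^ ε * (n : ℝ) ^ (-(ε / 2)) := by rw [← rpow_add hn0]; ring_nf
      _ ≤ _ := by rw [hr_eq]; gcongr
  have hlog3 : log 3 ≤ c * log n := by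
    have : log 3 ≤ log n := log_le_log (by norm_num) (by exact_mod_cast hn3)
    nlinarith [log_nonneg (show (1 : ℝ) ≤ 3 by norm_num)]
  have hrate : 0 ≤ 2 * log 2 - 1 := by linarith [log_two_gt_d9]
  calc _ ≤ _ := measureReal_mono (by intro f hf hsampled; exact hf fun _ => hsampled)
    _ ≤ _ := bernoulliPi_not_wellSampled_le hr s
    _ ≤ exp (-(2 * log 2 - 1) * (3 * (c * log n))) + exp (-(3 * (c * log n))) :=
        add_le_add (exp_le_exp.2 (mul_le_mul_of_nonpos_left hmarks (by linarith)))
          (exp_le_exp.2 (neg_le_neg hmarks))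
    _ ≤ exp (-(c * log n)) := exp_neg_add_exp_neg_le_exp_neg hlog3
    _ = (n : ℝ) ^ (-c) := by rw [rpow_def_of_pos hn0]; ring_nf

end Sampling

/-- Simultaneous concentration of the sampled vertices on all long cycles. A
disjoint union of cycles on `n` vertices is modelled by a permutation `σ`
(cycles = orbits). Each vertex is marked independently with probability
`p = n^(-ε/2)`, where `n^(ε/2) ≥ 3c·ln n`. Then with probability at least
`1 - n^(1-c)`, every cycle of length `k ≥ n^ε` has at most `2kp` marked
vertices and contains at least one marked vertex. -/
theorem shrink_union_bound {V : Type*} [Fintype V]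
    (σ : Equiv.Perm V) (n : ℕ) (hn : n = Fintype.card V)
    (ε c : ℝ) (hε1 : ε < 1)
    (hlarge : 3 * c * Real.log n ≤ (n : ℝ) ^ (ε / 2))
    (p : ENNReal) (hp : p = ENNReal.ofReal ((n : ℝ) ^ (-(ε / 2)))) (hp1 : p ≤ 1) :
    1 - (n : ℝ) ^ ((1 : ℝ) - c) ≤
      (Measure.pi (fun _ : V => (PMF.bernoulli p.toNNReal (by simpa using ENNReal.toNNReal_mono ENNReal.one_ne_top hp1)).toMeasure)
        {f : V → Bool | ∀ v : V,
          (n : ℝ) ^ ε ≤ (Nat.card {w : V | σ.SameCycle v w} : ℝ) →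
          ((Nat.card {w : V | σ.SameCycle v w ∧ f w = true} : ℝ)
              ≤ 2 * (Nat.card {w : V | σ.SameCycle v w} : ℝ) * (n : ℝ) ^ (-(ε / 2)) ∧
            ∃ w : V, σ.SameCycle v w ∧ f w = true)}).toReal := by
  have hr : p.toNNReal ≤ 1 := by simpa using ENNReal.toNNReal_mono ENNReal.one_ne_top hp1
  have hr_eq : (p.toNNReal : ℝ) = (n : ℝ) ^ (-(ε / 2)) := by
    rw [ENNReal.coe_toNNReal_eq_toReal, hp, ENNReal.toReal_ofReal (by positivity)]
  rcases le_or_gt 1 ((n : ℝ) ^ (1 - c)) with htrivial | hlt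
  · exact (sub_nonpos.2 htrivial).trans ENNReal.toReal_nonneg
  have hc_ne : 1 + -c ≠ 0 := fun hc => by
    rw [← sub_eq_add_neg] at hc
    simp [hc] at hlt
  rw [← hr_eq]
  change _ ≤ (bernoulliPi p.toNNReal hr).real
    {f | ∀ v, _ → WellSampled (σ.SameCycle v) p.toNNReal f}
  calc 1 - (n : ℝ) ^ (1 - c) = 1 - Fintype.card V * (n : ℝ) ^ (-c) := by
        rw [← hn, sub_eq_add_neg (1 : ℝ) c, rpow_one_add' n.cast_nonneg hc_ne]
    _ ≤ _ := one_sub_card_mul_le_measureReal_forall _ (Set.toFinite _).measurableSet fun v =>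
        bernoulliPi_long_not_wellSampled_le hr _ (hn ▸ Fintype.card_pos_iff.2 ⟨v⟩) hε1 hlarge
          hr_eq hlt
end
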